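/- Let λ be an uncountable regular cardinal with λ^{<λ} = λ and let P be a non-atomic <λ-closed forcing of cardinality λ. Then P has a dense subset that, with the induced order, is order-isomorphic to Add*(λ,1); in particular, P is sub-equivalent to Add(λ,1). -/

import Mathlib

universe u v

noncomputable section

/-! ## Sequences of ordinals

`SeqLT o v` is the set `v^{<o}` of all sequences of ordinals `< v` of length `< o`
(for `o > 0`; values beyond the length are normalized to `0`).
`SeqFull o v` is the generalized Baire space `v^o` of all functions from ordinals `< o`
to ordinals `< v`. -/

/-- An element of `v^{<o}`: a sequence of ordinals `< v` of length `< o`. -/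
structure SeqLT (o v : Ordinal.{u}) : Type (u + 1) where
  len : Ordinal.{u}
  len_lt : len < o ⊔ 1
  val : Ordinal.{u} → Ordinal.{u}
  val_lt : ∀ β, β < len → val β < v
  val_zero : ∀ β, len ≤ β → val β = 0

namespace SeqLT

variable {o v : Ordinal.{u}}

/-- `s ⊆ t`, i.e. `t` end-extends `s`. -/
protected def le (s t : SeqLT o v) : Prop :=
  s.len ≤ t.len ∧ ∀ β, β < s.len → s.val β = t.val β

/-- `s ⊊ t`, i.e. `t` properly end-extends `s`. -/
protected def slt (s t : SeqLT o v) : Prop :=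
  s.le t ∧ s.len < t.len

/-- The empty sequence. -/
protected def empty (o v : Ordinal.{u}) : SeqLT o v where
  len := 0
  len_lt := lt_sup_iff.mpr (Or.inr zero_lt_one)
  val := fun _ => 0
  val_lt := fun β h => absurd h (not_lt_of_ge (zero_le (a := β)))
  val_zero := fun _ _ => rfl

/-- `s⌢⟨β⟩`: the sequence `s` extended by the single value `β`. -/
def snoc (s : SeqLT o v) (β : Ordinal.{u}) : SeqLT o v :=
  if h : s.len + 1 < o ⊔ 1 ∧ β < v then
    { len := s.len + 1
      len_lt := h.1
      val := fun γ => if γ = s.len then β else s.val γ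
      val_lt := fun γ hγ => by
        rcases eq_or_ne γ s.len with rfl | hne
        · simpa using h.2
        · simp only [if_neg hne]
          refine s.val_lt γ (lt_of_le_of_ne ?_ hne)
          rw [Ordinal.add_one_eq_succ] at hγ
          exact Order.lt_succ_iff.mp hγ
      val_zero := fun γ hγ => by
        have h1 : s.len < γ :=
          lt_of_lt_of_le (by rw [Ordinal.add_one_eq_succ]; exact Order.lt_succ s.len) hγ
        simp only [if_neg h1.ne']
        exact s.val_zero γ h1.le }
  else s

protected theorem le_refl (s : SeqLT o v) : s.le s :=
  ⟨le_rfl, fun _ _ => rfl⟩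

protected theorem le_trans {s t u : SeqLT o v} (h1 : s.le t) (h2 : t.le u) : s.le u :=
  ⟨h1.1.trans h2.1, fun β hβ => (h1.2 β hβ).trans (h2.2 β (lt_of_lt_of_le hβ h1.1))⟩

end SeqLT

/-- An element of the generalized Baire space `v^o`. -/
structure SeqFull (o v : Ordinal.{u}) : Type (u + 1) where
  val : Ordinal.{u} → Ordinal.{u}
  val_lt : ∀ β, β < o → val β < v
  val_zero : ∀ β, o ≤ β → val β = 0

/-- The restriction `x ↾ β` of `x : v^o` to an ordinal `β < o`. -/
def SeqFull.res {o v : Ordinal.{u}} (x : SeqFull o v) (β : Ordinal.{u}) : SeqLT o v :=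
  if h : β < o ⊔ 1 then
    { len := β
      len_lt := h
      val := fun γ => if γ < β then x.val γ else 0
      val_lt := fun γ hγ => by
        simp only [if_pos hγ]
        rcases lt_sup_iff.mp h with h' | h'
        · exact x.val_lt γ (hγ.trans h')
        · rw [Ordinal.lt_one_iff_zero] at h'
          exact absurd (h' ▸ hγ) (not_lt_of_ge (zero_le (a := γ)))
      val_zero := fun γ hγ => if_neg (not_lt.mpr hγ) }
  else SeqLT.empty o v

/-- `s ⊆ x`: the sequence `s` is an initial segment of `x : v^o`. -/
def SeqLT.prefixOf {o v : Ordinal.{u}} (s : SeqLT o v) (x : SeqFull o v) : Prop :=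
  ∀ β, β < s.len → s.val β = x.val β

/-! ## The bounded topology -/

/-- The basic open set `N_t`. -/
def basicOpen {o v : Ordinal.{u}} (t : SeqLT o v) : Set (SeqFull o v) :=
  {x | t.prefixOf x}

/-- The bounded (standard) topology on the generalized Baire space, generated by the
basic open sets `N_t`. -/
instance (o v : Ordinal.{u}) : TopologicalSpace (SeqFull o v) :=
  TopologicalSpace.generateFrom {U | ∃ t : SeqLT o v, U = basicOpen t}

/-- `A` is a nowhere dense subset of `B` (in the subspace topology on `B`). -/
def NowhereDenseIn {o v : Ordinal.{u}} (A B : Set (SeqFull o v)) : Prop :=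
  A ⊆ B ∧ interior (closure {x : ↥B | (x : SeqFull o v) ∈ A}) = ∅

/-- `A` is `o`-meager in `B`: `A ∩ B` is the union of (card of) `o` many nowhere dense
subsets of `B`. -/
def MeagerIn {o v : Ordinal.{u}} (A B : Set (SeqFull o v)) : Prop :=
  ∃ F : {β : Ordinal.{u} // β < o} → Set (SeqFull o v),
    (∀ i, NowhereDenseIn (F i) B) ∧ A ∩ B = ⋃ i, F i

/-- `A` is comeager in `B`: `B \ A` is meager in `B`. -/
def ComeagerIn {o v : Ordinal.{u}} (A B : Set (SeqFull o v)) : Prop :=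
  MeagerIn (B \ A) B

/-- `A` has the `o`-Baire property: for some open `U`, `A △ U` is meager. -/
def BaireSet {o v : Ordinal.{u}} (A : Set (SeqFull o v)) : Prop :=
  ∃ U : Set (SeqFull o v), IsOpen U ∧ MeagerIn (symmDiff A U) Set.univ

/-! ## Homomorphisms of `v^{<o}` -/

/-- A homomorphism: strictly extension-preserving map of `v^{<o}` to itself. -/
def IsHom {o v : Ordinal.{u}} (f : SeqLT o v → SeqLT o v) : Prop :=
  ∀ s t : SeqLT o v, s.slt t → (f s).slt (f t)

/-- `f` is dense: for every `s` and every `t ⊇ f(s)` there is `β < v` with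
`f(s⌢⟨β⟩) ⊇ t`. -/
def IsDenseMap {o v : Ordinal.{u}} (f : SeqLT o v → SeqLT o v) : Prop :=
  ∀ s t : SeqLT o v, (f s).le t → ∃ β, β < v ∧ t.le (f (s.snoc β))

/-- `u = ⋃_{α<γ} s α` for a chain `s`. -/
def IsUnionOfChain {o v : Ordinal.{u}} (u : SeqLT o v) (γ : Ordinal.{u})
    (s : Ordinal.{u} → SeqLT o v) : Prop :=
  (∀ α, α < γ → (s α).le u) ∧ ∀ β, β < u.len → ∃ α, α < γ ∧ β < (s α).len

/-- `f` is continuous: for every limit `γ < o` and every strictly increasing sequence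
`⟨s_α : α < γ⟩`, `f(⋃_{α<γ} s_α) = ⋃_{α<γ} f(s_α)`. -/
def IsContinuousMap {o v : Ordinal.{u}} (f : SeqLT o v → SeqLT o v) : Prop :=
  ∀ γ : Ordinal.{u}, Order.IsSuccLimit γ → γ < o →
    ∀ s : Ordinal.{u} → SeqLT o v, (∀ α β, α < β → β < γ → (s α).slt (s β)) →
      ∀ u : SeqLT o v, IsUnionOfChain u γ s → IsUnionOfChain (f u) γ fun α => f (s α)

/-- `y = f*(x) = ⋃_{α<o} f(x↾α)` for a homomorphism `f`. -/
def FStarVal {o v : Ordinal.{u}} (f : SeqLT o v → SeqLT o v) (x y : SeqFull o v) : Prop :=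
  (∀ α, α < o → (f (x.res α)).prefixOf y) ∧
    ∀ β, β < o → ∃ α, α < o ∧ β < (f (x.res α)).len

/-! ## Clubs and the almost Baire property -/

/-- `C` is a club (closed unbounded set) in the ordinal `o`. -/
def IsClubIn (C : Set Ordinal.{u}) (o : Ordinal.{u}) : Prop :=
  (∀ γ ∈ C, γ < o) ∧ (∀ β, β < o → ∃ γ ∈ C, β ≤ γ) ∧
    ∀ β, β < o → 0 < β → (∀ γ, γ < β → ∃ ξ ∈ C, γ < ξ ∧ ξ < β) → β ∈ C

/-- The set of functions coding elements of the club filter as characteristic functions. -/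
def ClSet (o v : Ordinal.{u}) : Set (SeqFull o v) :=
  {x | ∃ C : Set Ordinal.{u}, IsClubIn C o ∧ ∀ i ∈ C, x.val i ≠ 0}

/-- The set of functions coding elements of the nonstationary ideal. -/
def NsSet (o v : Ordinal.{u}) : Set (SeqFull o v) :=
  {x | ∃ C : Set Ordinal.{u}, IsClubIn C o ∧ ∀ i ∈ C, x.val i = 0}

/-- `A` is almost Baire: there is a dense homomorphism `f` with `ran f* ⊆ A`, or a dense
continuous homomorphism `f` with `f ∅ = ∅` and `ran f* ⊆ Aᶜ`. -/
def AlmostBaire {o v : Ordinal.{u}} (A : Set (SeqFull o v)) : Prop :=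
  ∃ f : SeqLT o v → SeqLT o v, IsHom f ∧ IsDenseMap f ∧
    ((∀ x y, FStarVal f x y → y ∈ A) ∨
      ((∀ x y, FStarVal f x y → y ∉ A) ∧ IsContinuousMap f ∧
        f (SeqLT.empty o v) = SeqLT.empty o v))

/-! ## Banach–Mazur games of length `o`

A run of the game is a strictly increasing sequence `⟨s_α : α < o⟩` in `v^{<o}`;
player I plays at even positions (`0` and limits count as even), player II at odd ones.
In the game `G^t` the first move of player I must extend `t`; taking `t = ∅` gives the
plain Banach–Mazur game. -/

/-- `γ` is an even ordinal (`0` and limits are even). -/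
def EvenOrd (γ : Ordinal.{u}) : Prop := ∃ δ : Ordinal.{u}, γ = 2 * δ

/-- `γ` is an odd ordinal. -/
def OddOrd (γ : Ordinal.{u}) : Prop := ∃ δ : Ordinal.{u}, γ = 2 * δ + 1

/-- The moves of a (partial) run, as a function on ordinals. -/
abbrev Play (o v : Ordinal.{u}) := Ordinal.{u} → SeqLT o v

/-- A strategy: given the length of the current position and the moves so far,
produce the next move. -/
abbrev Strat (o v : Ordinal.{u}) := Ordinal.{u} → Play o v → SeqLT o v

/-- `p` is a legal partial run of length `γ` of the game `G^t`: strictly increasing moves,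
the first move extends `t`, and the moves beyond `γ` are normalized to `∅`. -/
def IsPos {o v : Ordinal.{u}} (t : SeqLT o v) (p : Play o v) (γ : Ordinal.{u}) : Prop :=
  (∀ α β, α < β → β < γ → (p α).slt (p β)) ∧ (0 < γ → t.le (p 0)) ∧
    ∀ α, γ ≤ α → p α = SeqLT.empty o v

/-- The restriction of a run to its first `γ` moves. -/
def resPlay {o v : Ordinal.{u}} (p : Play o v) (γ : Ordinal.{u}) : Play o v :=
  fun α => if α < γ then p α else SeqLT.empty o v

/-- `m` is a legal move at the position `p` of length `γ` in the game `G^t`. -/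
def MoveOK {o v : Ordinal.{u}} (t : SeqLT o v) (p : Play o v) (γ : Ordinal.{u})
    (m : SeqLT o v) : Prop :=
  (∀ α, α < γ → (p α).slt m) ∧ (γ = 0 → t.le m)

/-- `σ` is a strategy for player I in `G^t`: it assigns a legal move to every legal
position of even length. -/
def LegalI {o v : Ordinal.{u}} (t : SeqLT o v) (σ : Strat o v) : Prop :=
  ∀ γ, γ < o → EvenOrd γ → ∀ p, IsPos t p γ → MoveOK t p γ (σ γ p)

/-- `σ` is a strategy for player II in `G^t`: it assigns a legal move to every legal
position of odd length. -/
def LegalII {o v : Ordinal.{u}} (t : SeqLT o v) (σ : Strat o v) : Prop :=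
  ∀ γ, γ < o → OddOrd γ → ∀ p, IsPos t p γ → MoveOK t p γ (σ γ p)

/-- The first `γ` moves of `p` follow the strategy `σ` of player I. -/
def FollowsI {o v : Ordinal.{u}} (σ : Strat o v) (p : Play o v) (γ : Ordinal.{u}) : Prop :=
  ∀ α, α < γ → EvenOrd α → p α = σ α (resPlay p α)

/-- The first `γ` moves of `p` follow the strategy `σ` of player II. -/
def FollowsII {o v : Ordinal.{u}} (σ : Strat o v) (p : Play o v) (γ : Ordinal.{u}) : Prop :=
  ∀ α, α < γ → OddOrd α → p α = σ α (resPlay p α)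

/-- `x = ⋃_{α<o} p α` is the outcome of the complete run `p`. -/
def IsOutcome {o v : Ordinal.{u}} (p : Play o v) (x : SeqFull o v) : Prop :=
  (∀ α, α < o → (p α).prefixOf x) ∧ ∀ β, β < o → ∃ α, α < o ∧ β < (p α).len

/-- Player I has a winning strategy in the Banach–Mazur game `G^t(A)` of length `o`. -/
def WinIStrat {o v : Ordinal.{u}} (t : SeqLT o v) (A : Set (SeqFull o v)) : Prop :=
  ∃ σ : Strat o v, LegalI t σ ∧
    ∀ p : Play o v, IsPos t p o → FollowsI σ p o → ∃ x, IsOutcome p x ∧ x ∈ A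

/-- Player II has a winning strategy in the Banach–Mazur game `G^t(A)` of length `o`. -/
def WinIIStrat {o v : Ordinal.{u}} (t : SeqLT o v) (A : Set (SeqFull o v)) : Prop :=
  ∃ σ : Strat o v, LegalII t σ ∧
    ∀ p : Play o v, IsPos t p o → FollowsII σ p o → ∃ x, IsOutcome p x ∧ x ∉ A

/-- `σ` is a tactic for player II: its moves depend only on the union of the previous moves. -/
def IsTacticII {o v : Ordinal.{u}} (t : SeqLT o v) (σ : Strat o v) : Prop :=
  ∃ f : SeqLT o v → SeqLT o v, ∀ γ, γ < o → OddOrd γ → ∀ p, IsPos t p γ →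
    ∀ u, IsUnionOfChain u γ p → σ γ p = f u

/-- Player II has a winning tactic in the Banach–Mazur game `G^t(A)` of length `o`. -/
def WinIITactic {o v : Ordinal.{u}} (t : SeqLT o v) (A : Set (SeqFull o v)) : Prop :=
  ∃ σ : Strat o v, LegalII t σ ∧ IsTacticII t σ ∧
    ∀ p : Play o v, IsPos t p o → FollowsII σ p o → ∃ x, IsOutcome p x ∧ x ∉ A

/-! ## Trees and perfect sets -/

/-- A subtree of `v^{<o}`: a downwards closed set of sequences. -/
def IsSubtree {o v : Ordinal.{u}} (T : Set (SeqLT o v)) : Prop :=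
  ∀ s ∈ T, ∀ r : SeqLT o v, r.le s → r ∈ T

/-- `T` is closed: every strictly increasing sequence in `T` of length `< o` has an
upper bound in `T`. -/
def TreeClosed {o v : Ordinal.{u}} (T : Set (SeqLT o v)) : Prop :=
  ∀ γ : Ordinal.{u}, γ < o → ∀ s : Ordinal.{u} → SeqLT o v,
    (∀ α β, α < β → β < γ → (s α).slt (s β)) → (∀ α, α < γ → s α ∈ T) →
      ∃ b ∈ T, ∀ α, α < γ → (s α).le b

/-- `t` is a direct successor of `s`. -/
def IsDirectSucc {o v : Ordinal.{u}} (s t : SeqLT o v) : Prop :=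
  s.slt t ∧ t.len = s.len + 1

/-- `T` is a perfect tree: a (nonempty) closed subtree whose splitting nodes are cofinal. -/
def IsPerfectTree {o v : Ordinal.{u}} (T : Set (SeqLT o v)) : Prop :=
  T.Nonempty ∧ IsSubtree T ∧ TreeClosed T ∧
    ∀ s ∈ T, ∃ t ∈ T, s.le t ∧
      ∃ t₁ ∈ T, ∃ t₂ ∈ T, IsDirectSucc t t₁ ∧ IsDirectSucc t t₂ ∧ t₁ ≠ t₂

/-- The body `[T]` of a tree `T`: the set of branches of length `o` through `T`. -/
def treeBody {o v : Ordinal.{u}} (T : Set (SeqLT o v)) : Set (SeqFull o v) :=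
  {x | ∀ α, α < o → x.res α ∈ T}

/-- The forcing `Add(λ,1)`: sequences in `λ^{<λ}` ordered by reverse inclusion. -/
instance (o w : Ordinal.{u}) : Preorder (SeqLT o w) where
  le p q := SeqLT.le q p
  le_refl p := SeqLT.le_refl p
  le_trans p q r h1 h2 := SeqLT.le_trans h2 h1

/-- A subset `D` of a forcing (preorder) is dense if every condition has an extension in `D`. -/
def DenseSub {P : Type v} [Preorder P] (D : Set P) : Prop :=
  ∀ p : P, ∃ d ∈ D, d ≤ p

/-- A sub-isomorphism `ι : P → Q` is an order isomorphism of `P` onto a dense subset of `Q`. -/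
structure IsSubIso {P Q : Type v} [Preorder P] [Preorder Q] (ι : P → Q) : Prop where
  inj : Function.Injective ι
  le_iff : ∀ p p' : P, p ≤ p' ↔ ι p ≤ ι p'
  dense : DenseSub (Set.range ι)

/-- `P` and `Q` are sub-equivalent if there are a forcing `R` and sub-isomorphisms
`R → P` and `R → Q`. -/
def SubEquiv (P Q : Type v) [Preorder P] [Preorder Q] : Prop :=
  ∃ (R : Type v) (instR : Preorder R) (f : R → P) (g : R → Q),
    @IsSubIso R P instR _ f ∧ @IsSubIso R Q instR _ g

/-! Enumerate `P` as `⟨p_β : β < λ⟩` and attach to every `s ∈ λ^{δ+1}`, by recursion on `δ`, a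
condition `node s`: below the lower bounds of the branch `⟨node (s ↾ (α+1)) : α < δ⟩` (nonempty by
`<λ`-closure) fix a maximal antichain `⟨a_β : β < λ⟩` of conditions deciding `p_δ`, of size `λ`
because `P` is non-atomic, and put `node s = a_{s δ}`. Since siblings are incompatible, `node`
reverses end-extension exactly. Its range is dense: for `q = p_γ`, a fusion sequence below `q`
follows a branch of nodes, by maximality at each level and closure at limits, up to level `γ`,
where the node is compatible with `q` and decides it, hence lies below `q`. -/

namespace SeqLT

variable {o v : Ordinal.{u}}

protected theorem le_antisymm {s t : SeqLT o v} (hst : s.le t) (hts : t.le s) : s = t := by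
  obtain ⟨sl, _, sv, _, svz⟩ := s
  obtain ⟨tl, _, tv, _, tvz⟩ := t
  obtain rfl : sl = tl := le_antisymm hst.1 hts.1
  obtain rfl : sv = tv := funext fun β =>
    (lt_or_ge β sl).elim (hst.2 β) fun h => (svz β h).trans (tvz β h).symm
  rfl

theorem len_lt_of_isSuccLimit (ho : Order.IsSuccLimit o) (s : SeqLT o v) : s.len < o := by
  simpa [sup_eq_left.2 (Order.one_le_iff_pos.2 ho.pos)] using s.len_lt

def trunc (f : Ordinal.{u} → Ordinal.{u}) (n : Ordinal.{u}) (hn : n < o ⊔ 1)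
    (hf : ∀ β < n, f β < v) : SeqLT o v where
  len := n
  len_lt := hn
  val β := if β < n then f β else 0
  val_lt β hβ := by simpa [hβ] using hf β hβ
  val_zero β hβ := if_neg hβ.not_gt

theorem le_snoc {s : SeqLT o v} {β : Ordinal.{u}} (h : s.len + 1 < o ⊔ 1 ∧ β < v) :
    s.le (s.snoc β) ∧ (s.snoc β).len = s.len + 1 := by
  unfold snoc
  rw [dif_pos h]
  exact ⟨⟨(Order.lt_add_one_iff.2 le_rfl).le, fun γ hγ => (if_neg hγ.ne).symm⟩, rfl⟩

end SeqLT

namespace Forcing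

open Order

variable {P : Type v} [Preorder P]

def Compatible (p q : P) : Prop := ∃ r, r ≤ p ∧ r ≤ q

theorem Compatible.symm {p q : P} (h : Compatible p q) : Compatible q p :=
  let ⟨r, hp, hq⟩ := h
  ⟨r, hq, hp⟩

theorem Compatible.mono {p p' q q' : P} (h : Compatible p q) (hp : p ≤ p') (hq : q ≤ q') :
    Compatible p' q' :=
  let ⟨r, hrp, hrq⟩ := h
  ⟨r, hrp.trans hp, hrq.trans hq⟩

theorem compatible_of_le {p q : P} (h : p ≤ q) : Compatible p q := ⟨p, le_rfl, h⟩

def Decides (p q : P) : Prop := p ≤ q ∨ ¬Compatible p q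

theorem Decides.le_of_compatible {p q : P} (h : Decides p q) (hc : Compatible p q) : p ≤ q :=
  h.resolve_right (not_not.2 hc)

theorem exists_le_decides (p q : P) : ∃ r ≤ p, Decides r q := by
  by_cases h : Compatible p q
  · obtain ⟨r, hp, hq⟩ := h
    exact ⟨r, hp, .inl hq⟩
  · exact ⟨p, le_rfl, .inr h⟩

def Atomless (P : Type v) [Preorder P] : Prop :=
  ∀ p : P, ∃ q r, q ≤ p ∧ r ≤ p ∧ ¬Compatible q r

theorem Atomless.exists_split_decides (h : Atomless P) (p q : P) :
    ∃ a e, a ≤ p ∧ e ≤ p ∧ ¬Compatible a e ∧ Decides a q := by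
  obtain ⟨a, e, ha, he, hae⟩ := h p
  obtain ⟨a', ha', hdec⟩ := exists_le_decides a q
  exact ⟨a', e, ha'.trans ha, he, fun h => hae (h.mono ha' le_rfl), hdec⟩

def LtClosed (P : Type v) [Preorder P] (o : Ordinal.{u}) : Prop :=
  ∀ γ < o, ∀ f : Ordinal.{u} → P, AntitoneOn f (Set.Iio γ) → ∃ b, ∀ α < γ, b ≤ f α

theorem LtClosed.exists_mem_le {o : Ordinal.{u}} (hc : LtClosed P o) {L : Set P}
    (hL : IsLowerSet L) (hne : L.Nonempty) {δ : Ordinal.{u}} (hδ : δ < o) {f : Ordinal.{u} → P}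
    (hf : AntitoneOn f (Set.Iio δ)) (hfL : ∀ α < δ, f α ∈ L) : ∃ b ∈ L, ∀ α < δ, b ≤ f α := by
  rcases eq_zero_or_pos δ with rfl | hδ0
  · obtain ⟨b, hb⟩ := hne
    exact ⟨b, hb, fun _ hα => absurd hα not_lt_zero⟩
  · obtain ⟨b, hb⟩ := hc δ hδ f hf
    exact ⟨b, hL (hb 0 hδ0) (hfL 0 hδ0), hb⟩

def choiceSeq {α : Type*} (x₀ : α) (R : (ξ : Ordinal.{u}) → (∀ η < ξ, α) → α → Prop) :
    Ordinal.{u} → α :=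
  Ordinal.lt_wf.fix fun ξ prev => @Classical.epsilon α ⟨x₀⟩ (R ξ prev)

theorem choiceSeq_spec {α : Type*} {x₀ : α} {R : (ξ : Ordinal.{u}) → (∀ η < ξ, α) → α → Prop}
    {ξ : Ordinal.{u}} (h : ∃ x, R ξ (fun η _ => choiceSeq x₀ R η) x) :
    R ξ (fun η _ => choiceSeq x₀ R η) (choiceSeq x₀ R ξ) := by
  rw [show choiceSeq x₀ R ξ = _ from Ordinal.lt_wf.fix_eq _ ξ]
  exact Classical.epsilon_spec h

/-- A non-atomic `<o`-closed forcing, enumerated in order type `o`. -/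
structure Presentation (o : Ordinal.{u}) (P : Type v) [Preorder P] where
  enum : Ordinal.{u} → P
  exists_enum_eq : ∀ p, ∃ β < o, enum β = p
  isSuccLimit : IsSuccLimit o
  closed : LtClosed P o
  atomless : Atomless P

abbrev AddStar (o : Ordinal.{u}) := {s : SeqLT o o // ∃ β, s.len = β + 1}

namespace AddStar

variable {o : Ordinal.{u}}

def last (s : AddStar o) : Ordinal.{u} := s.2.choose

theorem len_eq (s : AddStar o) : s.1.len = last s + 1 := s.2.choose_spec

theorem lt_len_iff (s : AddStar o) {α : Ordinal.{u}} : α < s.1.len ↔ α ≤ last s := by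
  rw [len_eq, lt_add_one_iff]

theorem last_lt (ho : IsSuccLimit o) (s : AddStar o) : last s < o :=
  (lt_len_iff s).2 le_rfl |>.trans (s.1.len_lt_of_isSuccLimit ho)

end AddStar

theorem denseSub_range_val {o : Ordinal.{u}} (ho : IsSuccLimit o) :
    DenseSub (Set.range (Subtype.val : AddStar o → SeqLT o o)) := fun t =>
  have h := SeqLT.le_snoc (s := t) (β := 0)
    ⟨lt_sup_iff.2 (.inl (ho.succ_lt (t.len_lt_of_isSuccLimit ho))), ho.pos⟩
  ⟨t.snoc 0, ⟨⟨t.snoc 0, t.len, h.2⟩, rfl⟩, h.1⟩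

namespace Presentation

variable {o : Ordinal.{u}} (S : Presentation o P)

/-- Stage `β` of the construction of a maximal antichain in `L` of conditions deciding `q`:
`x.1` is its `β`-th member and `x.2` a reservoir, incompatible with it, below which the later
members are chosen. Maximality is achieved by taking care of `enum β` at stage `β`. -/
structure AntichainStep (L : Set P) (q : P) (β : Ordinal.{u}) (prev : ∀ η < β, P × P)
    (x : P × P) : Prop where
  fst_mem : x.1 ∈ L
  snd_mem : x.2 ∈ L
  not_compatible : ¬Compatible x.1 x.2
  decides : Decides x.1 q
  snd_le : ∀ η (h : η < β), x.2 ≤ (prev η h).2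
  not_compatible_prev : ∀ η (h : η < β), ¬Compatible x.1 (prev η h).1
  compatible_enum : S.enum β ∈ L →
    Compatible (S.enum β) x.1 ∨ ∃ η, ∃ h : η < β, Compatible (S.enum β) (prev η h).1

theorem exists_antichainStep {L : Set P} (hL : IsLowerSet L) (hne : L.Nonempty) (q : P)
    {β : Ordinal.{u}} (hβ : β < o) {s : Ordinal.{u} → P × P}
    (hs : ∀ η < β, S.AntichainStep L q η (fun α _ => s α) (s η)) :
    ∃ x, S.AntichainStep L q β (fun η _ => s η) x := by
  obtain ⟨E, hEL, hE⟩ := S.closed.exists_mem_le hL hne hβ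
    (antitoneOn_iff_forall_lt.2 fun α _ η hη hαη => (hs η hη).snd_le α hαη)
    fun η hη => (hs η hη).snd_mem
  have below_E {a : P} (ha : a ≤ E) : ∀ η < β, ¬Compatible a (s η).1 := fun η hη hc =>
    (hs η hη).not_compatible (hc.symm.mono le_rfl (ha.trans (hE η hη)))
  by_cases hfresh : S.enum β ∈ L ∧ ¬Compatible (S.enum β) E ∧
      ∀ η < β, ¬Compatible (S.enum β) (s η).1
  · obtain ⟨hr, hrE, hrprev⟩ := hfresh
    obtain ⟨a, ha, hdec⟩ := exists_le_decides (S.enum β) q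
    exact ⟨(a, E), hL ha hr, hEL, fun h => hrE (h.mono ha le_rfl), hdec, hE,
      fun η hη h => hrprev η hη (h.mono ha le_rfl), fun _ => .inl (compatible_of_le ha).symm⟩
  -- otherwise split a condition below `E` (and below `enum β`, if possible)
  obtain ⟨c, hcE, hc⟩ : ∃ c ≤ E, S.enum β ∈ L →
      c ≤ S.enum β ∨ ∃ η, ∃ _ : η < β, Compatible (S.enum β) (s η).1 := by
    by_cases hrE : Compatible (S.enum β) E
    · obtain ⟨c, hcr, hcE⟩ := hrE
      exact ⟨c, hcE, fun _ => .inl hcr⟩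
    · refine ⟨E, le_rfl, fun hr => .inr ?_⟩
      by_contra! h
      exact hfresh ⟨hr, hrE, h⟩
  obtain ⟨a, e, ha, he, hae, hdec⟩ := S.atomless.exists_split_decides c q
  refine ⟨(a, e), hL (ha.trans hcE) hEL, hL (he.trans hcE) hEL, hae, hdec,
    fun η hη => (he.trans hcE).trans (hE η hη), below_E (ha.trans hcE), fun hr => ?_⟩
  exact (hc hr).imp_left fun hcr => (compatible_of_le (ha.trans hcr)).symm

def antichainSeq (L : Set P) (q : P) : Ordinal.{u} → P × P :=
  choiceSeq (S.enum 0, S.enum 0) (S.AntichainStep L q)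

section Antichain

variable {L : Set P}

theorem antichainSeq_spec (hL : IsLowerSet L) (hne : L.Nonempty) (q : P) {β : Ordinal.{u}}
    (hβ : β < o) :
    S.AntichainStep L q β (fun η _ => S.antichainSeq L q η) (S.antichainSeq L q β) := by
  induction β using WellFoundedLT.induction with
  | _ β ih => exact choiceSeq_spec (S.exists_antichainStep hL hne q hβ fun η hη =>
      ih η hη (hη.trans hβ))

theorem not_compatible_antichainSeq (hL : IsLowerSet L) (hne : L.Nonempty) (q : P)
    {β β' : Ordinal.{u}} (hβ : β < o) (hβ' : β' < o) (hne' : β ≠ β') :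
    ¬Compatible (S.antichainSeq L q β).1 (S.antichainSeq L q β').1 := by
  rcases hne'.lt_or_gt with h | h
  · exact fun hc => (S.antichainSeq_spec hL hne q hβ').not_compatible_prev β h hc.symm
  · exact (S.antichainSeq_spec hL hne q hβ).not_compatible_prev β' h

theorem exists_compatible_antichainSeq (hL : IsLowerSet L) (hne : L.Nonempty) (q : P) {r : P}
    (hr : r ∈ L) : ∃ β < o, Compatible r (S.antichainSeq L q β).1 := by
  obtain ⟨γ, hγ, rfl⟩ := S.exists_enum_eq r
  rcases (S.antichainSeq_spec hL hne q hγ).compatible_enum hr with h | ⟨η, hη, h⟩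
  · exact ⟨γ, hγ, h⟩
  · exact ⟨η, hη.trans hγ, h⟩

end Antichain

/-- `S.node δ f` is the condition attached to the sequence `f ↾ (δ + 1)`. -/
def node : Ordinal.{u} → (Ordinal.{u} → Ordinal.{u}) → P :=
  Ordinal.lt_wf.fix fun δ prev f =>
    (S.antichainSeq {r | ∀ α (h : α < δ), r ≤ prev α h f} (S.enum δ) (f δ)).1

def branchBounds (δ : Ordinal.{u}) (f : Ordinal.{u} → Ordinal.{u}) : Set P :=
  {r | ∀ α < δ, r ≤ S.node α f}

theorem node_eq (δ : Ordinal.{u}) (f : Ordinal.{u} → Ordinal.{u}) :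
    S.node δ f = (S.antichainSeq (S.branchBounds δ f) (S.enum δ) (f δ)).1 := by
  rw [show S.node δ = _ from Ordinal.lt_wf.fix_eq _ δ]
  rfl

theorem isLowerSet_branchBounds (δ : Ordinal.{u}) (f : Ordinal.{u} → Ordinal.{u}) :
    IsLowerSet (S.branchBounds δ f) :=
  fun _ _ hba ha α hα => hba.trans (ha α hα)

theorem node_congr {δ : Ordinal.{u}} {f g : Ordinal.{u} → Ordinal.{u}}
    (h : ∀ α ≤ δ, f α = g α) : S.node δ f = S.node δ g := by
  induction δ using WellFoundedLT.induction generalizing f g with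
  | _ δ ih =>
    have hB : S.branchBounds δ f = S.branchBounds δ g := Set.ext fun r =>
      forall₂_congr fun α hα => by rw [ih α hα fun β hβ => h β (hβ.trans hα.le)]
    rw [node_eq, node_eq, hB, h δ le_rfl]

theorem branchBounds_congr {δ : Ordinal.{u}} {f g : Ordinal.{u} → Ordinal.{u}}
    (h : ∀ α < δ, f α = g α) : S.branchBounds δ f = S.branchBounds δ g :=
  Set.ext fun r => forall₂_congr fun α hα => by
    rw [S.node_congr fun β hβ => h β (hβ.trans_lt hα)]

theorem branchBounds_nonempty_of_forall {δ : Ordinal.{u}} {f : Ordinal.{u} → Ordinal.{u}}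
    (hδ : δ < o) (h : ∀ β < δ, S.node β f ∈ S.branchBounds β f) :
    (S.branchBounds δ f).Nonempty :=
  S.closed δ hδ _ (antitoneOn_iff_forall_lt.2 fun α _ β hβ hαβ => h β hβ α hαβ)

theorem node_mem_branchBounds {δ : Ordinal.{u}} {f : Ordinal.{u} → Ordinal.{u}} (hδ : δ < o)
    (hf : ∀ α ≤ δ, f α < o) : S.node δ f ∈ S.branchBounds δ f := by
  induction δ using WellFoundedLT.induction with
  | _ δ ih =>
    have hne := S.branchBounds_nonempty_of_forall hδ fun β hβ =>
      ih β hβ (hβ.trans hδ) fun α hα => hf α (hα.trans hβ.le)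
    rw [node_eq]
    exact (S.antichainSeq_spec (S.isLowerSet_branchBounds δ f) hne _ (hf δ le_rfl)).fst_mem

theorem branchBounds_nonempty {δ : Ordinal.{u}} {f : Ordinal.{u} → Ordinal.{u}} (hδ : δ < o)
    (hf : ∀ α < δ, f α < o) : (S.branchBounds δ f).Nonempty :=
  S.branchBounds_nonempty_of_forall hδ fun _ hβ =>
    S.node_mem_branchBounds (hβ.trans hδ) fun α hα => hf α (hα.trans_lt hβ)

theorem node_le_node {α δ : Ordinal.{u}} {f : Ordinal.{u} → Ordinal.{u}} (hδ : δ < o)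
    (hf : ∀ β ≤ δ, f β < o) (hαδ : α ≤ δ) : S.node δ f ≤ S.node α f := by
  rcases hαδ.lt_or_eq with h | rfl
  · exact S.node_mem_branchBounds hδ hf α h
  · exact le_rfl

theorem node_decides {δ : Ordinal.{u}} {f : Ordinal.{u} → Ordinal.{u}} (hδ : δ < o)
    (hf : ∀ α ≤ δ, f α < o) : Decides (S.node δ f) (S.enum δ) := by
  rw [node_eq]
  exact (S.antichainSeq_spec (S.isLowerSet_branchBounds δ f)
    (S.branchBounds_nonempty hδ fun α hα => hf α hα.le) _ (hf δ le_rfl)).decides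

theorem exists_compatible_node {δ : Ordinal.{u}} {f : Ordinal.{u} → Ordinal.{u}} {r : P}
    (hδ : δ < o) (hf : ∀ α < δ, f α < o) (hr : r ∈ S.branchBounds δ f) :
    ∃ β < o, Compatible r (S.node δ (Function.update f δ β)) := by
  simp only [node_eq, Function.update_self,
    S.branchBounds_congr (δ := δ) fun α hα => Function.update_of_ne hα.ne _ f]
  exact S.exists_compatible_antichainSeq (S.isLowerSet_branchBounds δ f)
    (S.branchBounds_nonempty hδ hf) _ hr

theorem eq_of_compatible_node {δ : Ordinal.{u}} {f g : Ordinal.{u} → Ordinal.{u}} (hδ : δ < o)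
    (hf : ∀ α ≤ δ, f α < o) (hg : ∀ α ≤ δ, g α < o)
    (h : Compatible (S.node δ f) (S.node δ g)) : ∀ α ≤ δ, f α = g α := by
  induction δ using WellFoundedLT.induction with
  | _ δ ih =>
    have hlt : ∀ α < δ, f α = g α := fun α hα =>
      ih α hα (hα.trans hδ) (fun β hβ => hf β (hβ.trans hα.le))
        (fun β hβ => hg β (hβ.trans hα.le))
        (h.mono (S.node_le_node hδ hf hα.le) (S.node_le_node hδ hg hα.le)) α le_rfl
    intro α hα
    rcases hα.lt_or_eq with hα | rfl
    · exact hlt α hα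
    by_contra hne
    rw [node_eq, node_eq, S.branchBounds_congr (f := g) fun β hβ => (hlt β hβ).symm] at h
    exact S.not_compatible_antichainSeq (S.isLowerSet_branchBounds _ f)
      (S.branchBounds_nonempty hδ fun β hβ => hf β hβ.le) _ (hf _ le_rfl) (hg _ le_rfl) hne h

/-- Stage `δ` of a fusion sequence below `q` following a branch of nodes: `x.1` is the next
condition of the sequence and `x.2` the next value of the branch. -/
structure WalkStep (q : P) (δ : Ordinal.{u}) (prev : ∀ η < δ, P × Ordinal.{u})
    (x : P × Ordinal.{u}) : Prop where
  fst_le : x.1 ≤ q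
  snd_lt : x.2 < o
  fst_le_prev : ∀ η (h : η < δ), x.1 ≤ (prev η h).1
  fst_le_node : x.1 ≤ S.node δ fun α => if h : α < δ then (prev α h).2 else x.2

section Walk

variable {S}

theorem WalkStep.fst_le_node_branch {q : P} {δ : Ordinal.{u}}
    {s : Ordinal.{u} → P × Ordinal.{u}} (h : S.WalkStep q δ (fun α _ => s α) (s δ)) :
    (s δ).1 ≤ S.node δ fun α => (s α).2 :=
  h.fst_le_node.trans_eq <| S.node_congr fun α hα => by
    rcases hα.lt_or_eq with hα | rfl <;> simp [*]

end Walk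

theorem exists_walkStep (q : P) {δ : Ordinal.{u}} (hδ : δ < o) {s : Ordinal.{u} → P × Ordinal.{u}}
    (hs : ∀ η < δ, S.WalkStep q η (fun α _ => s α) (s η)) :
    ∃ x, S.WalkStep q δ (fun η _ => s η) x := by
  obtain ⟨b, hbq, hb⟩ := S.closed.exists_mem_le (isLowerSet_Iic q) ⟨q, le_rfl⟩ hδ
    (antitoneOn_iff_forall_lt.2 fun α _ η hη hαη => (hs η hη).fst_le_prev α hαη)
    fun η hη => (hs η hη).fst_le
  obtain ⟨β, hβ, w, hwb, hwn⟩ := S.exists_compatible_node hδ (fun α hα => (hs α hα).snd_lt)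
    fun α hα => (hb α hα).trans (hs α hα).fst_le_node_branch
  refine ⟨(w, β), hwb.trans hbq, hβ, fun η hη => hwb.trans (hb η hη),
    hwn.trans_eq (S.node_congr fun α hα => ?_)⟩
  rcases hα.lt_or_eq with hα | rfl
  · simp [hα, Function.update_of_ne hα.ne]
  · simp

def walk (q : P) : Ordinal.{u} → P × Ordinal.{u} :=
  choiceSeq (q, 0) (S.WalkStep q)

theorem walk_spec (q : P) {δ : Ordinal.{u}} (hδ : δ < o) :
    S.WalkStep q δ (fun η _ => S.walk q η) (S.walk q δ) := by
  induction δ using WellFoundedLT.induction with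
  | _ δ ih => exact choiceSeq_spec (S.exists_walkStep q hδ fun η hη => ih η hη (hη.trans hδ))

theorem exists_node_le (q : P) : ∃ δ < o, ∃ f, (∀ α ≤ δ, f α < o) ∧ S.node δ f ≤ q := by
  obtain ⟨γ, hγ, rfl⟩ := S.exists_enum_eq q
  have hw := S.walk_spec (S.enum γ) hγ
  refine ⟨γ, hγ, _, fun α hα => (S.walk_spec _ (hα.trans_lt hγ)).snd_lt,
    (S.node_decides hγ fun α hα => (S.walk_spec _ (hα.trans_lt hγ)).snd_lt).le_of_compatible
      ⟨_, hw.fst_le_node_branch, hw.fst_le⟩⟩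

def embed (s : AddStar o) : P := S.node (AddStar.last s) s.1.val

section Embed

variable {S}

theorem embed_le_node (s : AddStar o) {γ : Ordinal.{u}} (hγ : γ < s.1.len) :
    S.embed s ≤ S.node γ s.1.val :=
  S.node_le_node (AddStar.last_lt S.isSuccLimit s)
    (fun α hα => s.1.val_lt α ((AddStar.lt_len_iff s).2 hα)) ((AddStar.lt_len_iff s).1 hγ)

theorem val_eq_of_embed_le {a b : AddStar o} (h : S.embed a ≤ S.embed b) {γ : Ordinal.{u}}
    (ha : γ < a.1.len) (hb : γ < b.1.len) : a.1.val γ = b.1.val γ :=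
  S.eq_of_compatible_node (ha.trans (a.1.len_lt_of_isSuccLimit S.isSuccLimit))
    (fun α hα => a.1.val_lt α (hα.trans_lt ha)) (fun α hα => b.1.val_lt α (hα.trans_lt hb))
    ⟨S.embed a, S.embed_le_node a ha, h.trans (S.embed_le_node b hb)⟩ γ le_rfl

theorem len_le_of_embed_le {a b : AddStar o} (h : S.embed a ≤ S.embed b) :
    b.1.len ≤ a.1.len := by
  by_contra! hlt
  set μ := a.1.len
  have hμ : μ < o := hlt.trans (b.1.len_lt_of_isSuccLimit S.isSuccLimit)
  have hb : ∀ α ≤ μ, b.1.val α < o := fun α hα => b.1.val_lt α (hα.trans_lt hlt)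
  obtain ⟨c, hc, hcb⟩ : ∃ c < o, c ≠ b.1.val μ := by
    by_cases h0 : b.1.val μ = 0
    · exact ⟨1, Ordinal.one_lt_of_isSuccLimit S.isSuccLimit, h0 ▸ one_ne_zero⟩
    · exact ⟨0, S.isSuccLimit.pos, Ne.symm h0⟩
  -- `g ↾ (μ + 1)` extends `a` but is a sibling of `b ↾ (μ + 1)`
  set g := Function.update b.1.val μ c
  have hg : ∀ α ≤ μ, g α < o := fun α hα => by
    rcases hα.lt_or_eq with hα | rfl
    · simpa [g, Function.update_of_ne hα.ne] using hb α hα.le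
    · simpa [g] using hc
  have hga : S.node (AddStar.last a) g = S.embed a := S.node_congr fun α hα => by
    have hαμ := (AddStar.lt_len_iff a).2 hα
    show Function.update b.1.val μ c α = a.1.val α
    rw [Function.update_of_ne hαμ.ne, val_eq_of_embed_le h hαμ (hαμ.trans hlt)]
  have hcomp : Compatible (S.node μ g) (S.node μ b.1.val) :=
    ⟨S.node μ g, le_rfl, (S.node_le_node hμ hg ((AddStar.lt_len_iff a).2 le_rfl).le).trans
      (hga.trans_le (h.trans (S.embed_le_node b hlt)))⟩
  exact hcb (by simpa [g] using S.eq_of_compatible_node hμ hg hb hcomp μ le_rfl)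

theorem embed_le_embed_iff {a b : AddStar o} : S.embed a ≤ S.embed b ↔ a ≤ b := by
  refine ⟨fun h => ⟨len_le_of_embed_le h, fun γ hγ => (val_eq_of_embed_le h
    (hγ.trans_le (len_le_of_embed_le h)) hγ).symm⟩, fun h => ?_⟩
  calc S.embed a ≤ S.node (AddStar.last b) a.1.val :=
        S.embed_le_node a (((AddStar.lt_len_iff b).2 le_rfl).trans_le h.1)
    _ = S.embed b := S.node_congr fun α hα => (h.2 α ((AddStar.lt_len_iff b).2 hα)).symm

end Embed

def embedding : AddStar o ↪o P :=
  ⟨⟨S.embed, fun _ _ h => Subtype.ext (SeqLT.le_antisymm (embed_le_embed_iff.1 h.ge)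
    (embed_le_embed_iff.1 h.le))⟩, embed_le_embed_iff⟩

theorem denseSub_range_embedding : DenseSub (Set.range S.embedding) := by
  intro p
  obtain ⟨δ, hδ, f, hf, hle⟩ := S.exists_node_le p
  let s : SeqLT o o := .trunc f (δ + 1)
    (lt_sup_iff.2 (.inl (S.isSuccLimit.succ_lt hδ))) fun β hβ => hf β (lt_succ_iff.1 hβ)
  refine ⟨S.embedding ⟨s, δ, rfl⟩, ⟨_, rfl⟩, le_of_eq_of_le ?_ hle⟩
  have hlast : AddStar.last ⟨s, δ, rfl⟩ = δ :=
    add_one_inj.1 (AddStar.len_eq ⟨s, δ, rfl⟩).symm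
  show S.node (AddStar.last ⟨s, δ, rfl⟩) s.val = S.node δ f
  rw [hlast]
  exact S.node_congr fun α hα => if_pos (lt_succ_iff.2 hα)

end Presentation

theorem Presentation.exists_denseSub_equiv_addStar {o : Ordinal.{u}} (S : Presentation o P) :
    ∃ D : Set P, DenseSub D ∧ ∃ e : D ≃ AddStar o, ∀ x y : D, x ≤ y ↔ e x ≤ e y :=
  ⟨_, S.denseSub_range_embedding, S.embedding.orderIso.symm.toEquiv,
    fun _ _ => S.embedding.orderIso.symm.le_iff_le.symm⟩

end Forcing

theorem Forcing.Presentation.subEquiv {o : Ordinal.{u}} {P : Type (u + 1)} [Preorder P]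
    (S : Presentation o P) : SubEquiv P (SeqLT o o) :=
  ⟨AddStar o, inferInstance, S.embedding, Subtype.val,
    ⟨S.embedding.injective, fun _ _ => S.embedding.le_iff_le.symm, S.denseSub_range_embedding⟩,
    ⟨Subtype.val_injective, fun _ _ => Iff.rfl, denseSub_range_val S.isSuccLimit⟩⟩

theorem statement3_general (l : Cardinal.{u}) (hunc : Cardinal.aleph0 < l)
    (P : Type (u + 1)) [Preorder P]
    (hcard : Cardinal.mk P = Cardinal.lift.{u + 1} l)
    (hatomless : ∀ p : P, ∃ q r : P, q ≤ p ∧ r ≤ p ∧ ¬∃ w : P, w ≤ q ∧ w ≤ r)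
    (hclosed : ∀ γ : Ordinal.{u}, γ < l.ord → ∀ f : Ordinal.{u} → P,
      (∀ α β : Ordinal.{u}, α ≤ β → β < γ → f β ≤ f α) →
        ∃ b : P, ∀ α, α < γ → b ≤ f α) :
    (∃ D : Set P, DenseSub D ∧
      ∃ e : D ≃ {s : SeqLT l.ord l.ord // ∃ β : Ordinal.{u}, s.len = β + 1},
        ∀ x y : D, x ≤ y ↔ e x ≤ e y) ∧
    SubEquiv P (SeqLT l.ord l.ord) := by
  have hlim : Order.IsSuccLimit l.ord := Cardinal.isSuccLimit_ord hunc.le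
  obtain ⟨e⟩ : Nonempty (Set.Iio l.ord ≃ P) :=
    Cardinal.eq.1 (by rw [Cardinal.mk_Iio_ordinal, Cardinal.card_ord, hcard])
  let S : Forcing.Presentation l.ord P :=
    { enum := fun β => if h : β < l.ord then e ⟨β, h⟩ else e ⟨0, hlim.pos⟩
      exists_enum_eq := fun p => ⟨e.symm p, (e.symm p).2, by
        rw [dif_pos (Set.mem_Iio.1 (e.symm p).2)]
        exact e.apply_symm_apply p⟩
      isSuccLimit := hlim
      closed := fun γ hγ f hf => hclosed γ hγ f fun α β hαβ hβ => hf (hαβ.trans_lt hβ) hβ hαβ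
      atomless := hatomless }
  exact ⟨S.exists_denseSub_equiv_addStar, S.subEquiv⟩

/-- Let `λ` be an uncountable regular cardinal with `λ^{<λ} = λ` and let `P` be a non-atomic
`<λ`-closed forcing of cardinality `λ`. Then `P` has a dense subset order-isomorphic to
`Add*(λ,1)` (the conditions of `Add(λ,1)` with domain a successor ordinal), and in particular
`P` is sub-equivalent to `Add(λ,1)`. -/
theorem statement3 (l : Cardinal.{u}) (hreg : l.IsRegular) (hunc : Cardinal.aleph0 < l)
    (hpow : Cardinal.powerlt l l = l)
    (P : Type (u + 1)) [Preorder P]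
    (hcard : Cardinal.mk P = Cardinal.lift.{u + 1} l)
    (hatomless : ∀ p : P, ∃ q r : P, q ≤ p ∧ r ≤ p ∧ ¬∃ w : P, w ≤ q ∧ w ≤ r)
    (hclosed : ∀ γ : Ordinal.{u}, γ < l.ord → ∀ f : Ordinal.{u} → P,
      (∀ α β : Ordinal.{u}, α ≤ β → β < γ → f β ≤ f α) →
        ∃ b : P, ∀ α, α < γ → b ≤ f α) :
    (∃ D : Set P, DenseSub D ∧
      ∃ e : D ≃ {s : SeqLT l.ord l.ord // ∃ β : Ordinal.{u}, s.len = β + 1},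
        ∀ x y : D, x ≤ y ↔ e x ≤ e y) ∧
    SubEquiv P (SeqLT l.ord l.ord) :=
  statement3_general l hunc P hcard hatomless hclosed

end
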